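/- For every real t > 0, the function 1/t - 1/(1 - e^{-t}) satisfies -1 ≤ 1/t - 1/(1 - e^{-t}) ≤ -1/2. -/

import Mathlib

/-! With `E = exp (-t)`, clearing denominators turns the lower bound into `(1 + t) E ≤ 1`, which is
`1 + t ≤ exp t`, and the upper bound into the Padé-type estimate `2 - t ≤ (2 + t) E`. The latter
holds because `x ↦ (2 + x) exp (-x) + x` has derivative `1 - (1 + x) exp (-x) ≥ 0`, by the
former. -/

open Real

lemma one_add_mul_exp_neg_le_one (x : ℝ) : (1 + x) * exp (-x) ≤ 1 := by
  calc (1 + x) * exp (-x) ≤ exp x * exp (-x) := by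
        gcongr
        linarith [add_one_le_exp x]
    _ = 1 := by rw [← exp_add, add_neg_cancel, exp_zero]

lemma hasDerivAt_two_add_mul_exp_neg_add_self (x : ℝ) :
    HasDerivAt (fun x => (2 + x) * exp (-x) + x) (1 - (1 + x) * exp (-x)) x := by
  have hexp : HasDerivAt (fun x => exp (-x)) (-exp (-x)) x := by
    simpa using (hasDerivAt_neg x).exp
  have h : HasDerivAt (fun x => (2 + x) * exp (-x) + x)
      (1 * exp (-x) + (2 + x) * -exp (-x) + 1) x :=
    (((hasDerivAt_id' x).const_add 2).mul hexp).add (hasDerivAt_id' x)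
  exact h.congr_deriv (by ring)

lemma monotone_two_add_mul_exp_neg_add_self : Monotone fun x : ℝ => (2 + x) * exp (-x) + x :=
  monotone_of_deriv_nonneg
    (fun x => (hasDerivAt_two_add_mul_exp_neg_add_self x).differentiableAt)
    (fun x => by
      rw [(hasDerivAt_two_add_mul_exp_neg_add_self x).deriv, sub_nonneg]
      exact one_add_mul_exp_neg_le_one x)

lemma two_sub_le_two_add_mul_exp_neg {x : ℝ} (hx : 0 ≤ x) : 2 - x ≤ (2 + x) * exp (-x) := by
  have hmono := monotone_two_add_mul_exp_neg_add_self hx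
  simp only [add_zero, neg_zero, exp_zero, mul_one] at hmono
  linarith

theorem bounds_on_exp_term (t : ℝ) (ht : 0 < t) :
    -1 ≤ 1 / t - 1 / (1 - Real.exp (-t)) ∧ 1 / t - 1 / (1 - Real.exp (-t)) ≤ -(1 / 2) := by
  have hden : 0 < 1 - exp (-t) := sub_pos.mpr (exp_lt_one_iff.mpr (neg_lt_zero.mpr ht))
  have hlower := one_add_mul_exp_neg_le_one t
  have hupper := two_sub_le_two_add_mul_exp_neg ht.le
  rw [div_sub_div _ _ ht.ne' hden.ne']
  constructor
  · rw [le_div_iff₀ (mul_pos ht hden)]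
    linear_combination hlower
  · rw [div_le_iff₀ (mul_pos ht hden)]
    linear_combination hupper / 2
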